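/- Given a fixed set of input tables of a relational database, one of which serves as the target table, the output of the Deep Feature Synthesis (DFS) algorithm need not be invariant to the order in which tables are traversed: there exists a relational database (namely one with three tables A, B, C, where A is the target table, A has foreign key references to both B and C, and B has a foreign key reference to C) and a search depth (depth 2) such that two different depth-first traversal orders of the children tables produce different augmented target tables. -/
import Mathlib


/-!
A relational database schema with three tables `A = 0`, `B = 1`, `C = 2` (`A` the target
table), where `A` has foreign key references to both `B` and `C`, and `B` has a foreign key
reference to `C`.  We formalize the Deep Feature Synthesis (DFS) algorithm
`Make_Features(Xⁱ, X_V, K)` symbolically: a table is (the list of) its feature columns, and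
the features appended by `Rfeat` (aggregated features along a backward relationship) and
`Dfeat` (directly joined features along a forward relationship) are recorded as symbolic
feature terms.  The visited set `X_V` is threaded (mutated) globally through the recursion,
and the traversal order is the order in which the children tables of a table are enumerated,
given by a list `ord` of the tables.
-/

/-- `fk t u` holds iff table `t` has a foreign key reference to table `u`
(i.e. `t` has a forward relationship to `u`): here `A → B`, `A → C`, `B → C`. -/
def fk (t u : Fin 3) : Bool :=
  decide ((t = 0 ∧ (u = 1 ∨ u = 2)) ∨ (t = 1 ∧ u = 2))

/-- Symbolic feature terms of the augmented tables. `efeat t` is the original feature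
content of table `t`; `rfeat t j F` is the aggregated feature appended to table `t` from
the (currently augmented) feature list `F` of a table `j` with a backward relationship to
`t`; `dfeat t j F` is the directly joined feature appended to `t` from the (currently
augmented) feature list `F` of a table `j` with a forward relationship from `t`. -/
inductive Feat where
  | efeat : Fin 3 → Feat
  | rfeat : Fin 3 → Fin 3 → List Feat → Feat
  | dfeat : Fin 3 → Fin 3 → List Feat → Feat

/-- Global DFS state: the current (augmented) feature columns of every table,
and the visited set. -/
structure DfsState where
  feats : Fin 3 → List Feat
  visited : List (Fin 3)

/-- Children of `t` along backward relationships, enumerated in traversal order `ord`. -/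
def backN (ord : List (Fin 3)) (t : Fin 3) : List (Fin 3) := ord.filter fun u => fk u t
/-- Children of `t` along forward relationships, enumerated in traversal order `ord`. -/
def forwN (ord : List (Fin 3)) (t : Fin 3) : List (Fin 3) := ord.filter fun u => fk t u

mutual
  /-- `Make_Features(Xᵗ, X_V, K)`: mark `t` visited; then for each table `j` with a backward
  relationship to `t` (in traversal order) recurse with depth `K - 1` if `j` is unvisited and
  append `Rfeat(Xᵗ, Xʲ)`; then likewise for forward relationships with `Dfeat(Xᵗ, Xʲ)`. -/
  def mf (ord : List (Fin 3)) : ℕ → Fin 3 → DfsState → DfsState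
    | 0, t, st => ⟨st.feats, t :: st.visited⟩
    | K + 1, t, st =>
      let st1 : DfsState := ⟨st.feats, t :: st.visited⟩
      let st2 := mfB ord K t (backN ord t) st1
      mfF ord K t (forwN ord t) st2
  termination_by K t st => (K, 0)

  /-- Loop of `Make_Features` over the backward children of `t`. -/
  def mfB (ord : List (Fin 3)) : ℕ → Fin 3 → List (Fin 3) → DfsState → DfsState
    | _, _, [], st => st
    | K, t, j :: rest, st =>
      let st1 := if j ∈ st.visited then st else mf ord K j st
      let st2 : DfsState :=
        ⟨fun u => if u = t then st1.feats u ++ [.rfeat t j (st1.feats j)] else st1.feats u,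
         st1.visited⟩
      mfB ord K t rest st2
  termination_by K t l st => (K, l.length)

  /-- Loop of `Make_Features` over the forward children of `t`. -/
  def mfF (ord : List (Fin 3)) : ℕ → Fin 3 → List (Fin 3) → DfsState → DfsState
    | _, _, [], st => st
    | K, t, j :: rest, st =>
      let st1 := if j ∈ st.visited then st else mf ord K j st
      let st2 : DfsState :=
        ⟨fun u => if u = t then st1.feats u ++ [.dfeat t j (st1.feats j)] else st1.feats u,
         st1.visited⟩
      mfF ord K t rest st2
  termination_by K t l st => (K, l.length)
end

/-- The initial database: every table consists of its own original features,
and no table is visited. -/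
def initState : DfsState := ⟨fun t => [.efeat t], []⟩

/-- The output of DFS need not be invariant to the traversal order: for the above schema
(three tables `A`, `B`, `C`, target `A`, foreign keys `A → B`, `A → C`, `B → C`) and search
depth 2, there are two different depth-first traversal orders producing two different
augmented target tables. -/
theorem dfs_not_traversal_invariant :
    ∃ ord₁ ord₂ : List (Fin 3),
      ord₁.Perm (List.finRange 3) ∧ ord₂.Perm (List.finRange 3) ∧ ord₁ ≠ ord₂ ∧
      (mf ord₁ 2 0 initState).feats 0 ≠ (mf ord₂ 2 0 initState).feats 0 := by
  refine ⟨[0,1,2], [0,2,1], by decide, by decide, by decide, ?_⟩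
  simp [mf, mfB, mfF, backN, forwN, initState, fk]
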